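/- Every Mathias generic set G (n-generic for all n, or even just 3-generic) is cohesive: for every computably enumerable set W, either G ⊆* W or G ⊆* complement of W. -/

import Mathlib

open Classical

namespace MathiasGenerics

/-- Codes for oracle partial recursive functions. -/
inductive OCode : Type
  | zero : OCode
  | succ : OCode
  | left : OCode
  | right : OCode
  | oracle : OCode
  | pair : OCode → OCode → OCode
  | comp : OCode → OCode → OCode
  | prec : OCode → OCode → OCode
  | rfind' : OCode → OCode

/-- Evaluation of an oracle code relative to an oracle `g`. -/
def evalo (g : ℕ →. ℕ) : OCode → ℕ →. ℕ
  | .zero => fun _ => Part.some 0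
  | .succ => fun n => Part.some (n + 1)
  | .left => fun n => Part.some n.unpair.1
  | .right => fun n => Part.some n.unpair.2
  | .oracle => g
  | .pair cf cg => fun n => Nat.pair <$> evalo g cf n <*> evalo g cg n
  | .comp cf cg => fun n => evalo g cg n >>= evalo g cf
  | .prec cf cg =>
    Nat.unpaired fun a n =>
      n.rec (evalo g cf a) fun y IH => do
        let i ← IH
        evalo g cg (Nat.pair a (Nat.pair y i))
  | .rfind' cf =>
    Nat.unpaired fun a m =>
      (Nat.rfind fun n => (fun m => m = 0) <$> evalo g cf (Nat.pair a (n + m))).map (· + m)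

/-- An effective numbering of oracle codes. -/
def encodeOC : OCode → ℕ
  | .zero => 0
  | .succ => 1
  | .left => 2
  | .right => 3
  | .oracle => 4
  | .pair a b => 4 * Nat.pair (encodeOC a) (encodeOC b) + 5
  | .comp a b => 4 * Nat.pair (encodeOC a) (encodeOC b) + 6
  | .prec a b => 4 * Nat.pair (encodeOC a) (encodeOC b) + 7
  | .rfind' a => 4 * encodeOC a + 8

noncomputable def decodeOC (n : ℕ) : OCode :=
  if h : ∃ c, encodeOC c = n then h.choose else OCode.zero

/-- Characteristic function of a set of naturals. -/
noncomputable def χ (A : Set ℕ) : ℕ → ℕ := fun n => if n ∈ A then 1 else 0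

/-- The characteristic function viewed as a partial function. -/
noncomputable def χp (A : Set ℕ) : ℕ →. ℕ := fun n => Part.some (χ A n)

/-- `f` is partial recursive in the oracle `g`. -/
def PartRecIn (g : ℕ →. ℕ) (f : ℕ →. ℕ) : Prop := ∃ c : OCode, ∀ n, evalo g c n = f n

/-- `f` (total) is recursive in the set `B`. -/
def FunRecIn (B : Set ℕ) (f : ℕ → ℕ) : Prop := PartRecIn (χp B) (fun n => Part.some (f n))

/-- Turing reducibility between sets of naturals. -/
def TR (A B : Set ℕ) : Prop := PartRecIn (χp B) (χp A)

/-- Turing equivalence. -/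
def TE (A B : Set ℕ) : Prop := TR A B ∧ TR B A

/-- The Turing jump of a set. -/
noncomputable def jump (A : Set ℕ) : Set ℕ :=
  {e | ∃ c : OCode, encodeOC c = e ∧ (evalo (χp A) c e).Dom}

/-- Iterated Turing jump. -/
noncomputable def jumpIter (A : Set ℕ) : ℕ → Set ℕ
  | 0 => A
  | n + 1 => jump (jumpIter A n)

/-- `∅^(n)`. -/
noncomputable def emptyJump (n : ℕ) : Set ℕ := jumpIter ∅ n

/-- Effective join (recursive join) of two sets. -/
def join (A B : Set ℕ) : Set ℕ :=
  {n | (n % 2 = 0 ∧ n / 2 ∈ A) ∨ (n % 2 = 1 ∧ n / 2 ∈ B)}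

/-- `S` is computably enumerable in `B`. -/
def CeIn (B : Set ℕ) (S : Set ℕ) : Prop :=
  ∃ c : OCode, S = {n | (evalo (χp B) c n).Dom}

/-- `S` is `Σ⁰ₙ`. -/
noncomputable def Sigma0 : ℕ → Set ℕ → Prop
  | 0 => fun S => TR S ∅
  | n + 1 => fun S => CeIn (emptyJump n) S

/-- `S` is `Π⁰ₙ`. -/
noncomputable def Pi0 (n : ℕ) (S : Set ℕ) : Prop := Sigma0 n Sᶜ

/-- `S` is `Δ⁰ₙ`. -/
noncomputable def Delta0 (n : ℕ) (S : Set ℕ) : Prop := Sigma0 n S ∧ Pi0 n S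

/-- A set is computable iff Turing reducible to `∅`. -/
def ComputableSet (S : Set ℕ) : Prop := TR S ∅

/-! ### Mathias conditions, coded by naturals

A (code of a) pre-condition is a pair `⟨d, e⟩` where `d` canonically codes the
finite set `D` and `e` is a code of a total `{0,1}`-valued computable function
whose set of `1`s is `E`. -/

/-- The finite part `D` of the coded condition `p`. -/
def condD (p : ℕ) : Finset ℕ := Denumerable.ofNat (Finset ℕ) p.unpair.1

/-- The infinite part `E` of the coded condition `p`. -/
noncomputable def condE (p : ℕ) : Set ℕ :=
  {x | evalo (χp ∅) (decodeOC p.unpair.2) x = Part.some 1}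

/-- The function computing `E` is total and `{0,1}`-valued (so `E` is computable). -/
noncomputable def condETotal (p : ℕ) : Prop :=
  ∀ x, evalo (χp ∅) (decodeOC p.unpair.2) x = Part.some 0 ∨
    evalo (χp ∅) (decodeOC p.unpair.2) x = Part.some 1

/-- `p` codes a Mathias pre-condition `(D, E)`: `E` computable and `max D < min E`. -/
noncomputable def IsPreCond (p : ℕ) : Prop :=
  condETotal p ∧ ∀ d ∈ condD p, ∀ x ∈ condE p, d < x

/-- `p` codes a Mathias condition: a pre-condition with `E` infinite. -/
noncomputable def IsCond (p : ℕ) : Prop := IsPreCond p ∧ (condE p).Infinite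

/-- `q` extends `p`. -/
noncomputable def Ext (q p : ℕ) : Prop :=
  condD p ⊆ condD q ∧ ↑(condD q) ⊆ ↑(condD p) ∪ condE p ∧ condE q ⊆ condE p

/-- The set `A` satisfies the coded condition `p`. -/
noncomputable def Sat (A : Set ℕ) (p : ℕ) : Prop :=
  ↑(condD p) ⊆ A ∧ A ⊆ ↑(condD p) ∪ condE p

/-- `A` meets the set of coded conditions `C`. -/
noncomputable def Meets (A : Set ℕ) (C : Set ℕ) : Prop := ∃ p ∈ C, Sat A p

/-- `A` avoids `C`: it satisfies a condition with no extension in `C`. -/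
noncomputable def Avoids (A : Set ℕ) (C : Set ℕ) : Prop :=
  ∃ p, IsCond p ∧ Sat A p ∧ ∀ q, IsCond q → Ext q p → q ∉ C

/-- `C` is a set of conditions. -/
noncomputable def CondSet (C : Set ℕ) : Prop := ∀ p ∈ C, IsCond p

/-- `C` is a set of pre-conditions. -/
noncomputable def PreCondSet (C : Set ℕ) : Prop := ∀ p ∈ C, IsPreCond p

/-- `G` is Mathias `n`-generic. -/
noncomputable def MGen (n : ℕ) (G : Set ℕ) : Prop :=
  ∀ C : Set ℕ, Sigma0 n C → CondSet C → Meets G C ∨ Avoids G C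

/-- `C` is a dense set of conditions. -/
noncomputable def DenseCond (C : Set ℕ) : Prop := ∀ p, IsCond p → ∃ q ∈ C, Ext q p

/-- `G` is weakly Mathias `n`-generic. -/
noncomputable def WMGen (n : ℕ) (G : Set ℕ) : Prop :=
  ∀ C : Set ℕ, Sigma0 n C → CondSet C → DenseCond C → Meets G C

/-- `G` is strongly Mathias `n`-generic: for every `Σ⁰ₙ` set `C` of pre-conditions,
either `G` meets some condition in `C` or `G` meets the set of conditions not
extended by any condition in `C`. -/
noncomputable def SMGen (n : ℕ) (G : Set ℕ) : Prop :=
  ∀ C : Set ℕ, Sigma0 n C → PreCondSet C →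
    (∃ p ∈ C, IsCond p ∧ Sat G p) ∨
    (∃ p, IsCond p ∧ Sat G p ∧ ∀ q ∈ C, IsCond q → ¬ Ext q p)

/-- `A` is hyperimmune relative to `X`: `A` is infinite and its principal function
is not dominated by any `X`-recursive function. -/
noncomputable def HypImmRel (A X : Set ℕ) : Prop :=
  A.Infinite ∧ ∀ f : ℕ → ℕ, FunRecIn X f → ∃ n, f n < Nat.nth (· ∈ A) n

/-- `A` is bi-immune: neither `A` nor its complement has an infinite computable subset. -/
def BiImmune (A : Set ℕ) : Prop :=
  (∀ S : Set ℕ, ComputableSet S → S.Infinite → ¬ S ⊆ A) ∧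
    (∀ S : Set ℕ, ComputableSet S → S.Infinite → ¬ S ⊆ Aᶜ)

/-! ### Cohen forcing -/

/-- The binary string `σ` is an initial segment of (the characteristic function of) `A`. -/
def StrSat (A : Set ℕ) (σ : List Bool) : Prop :=
  ∀ i : Fin σ.length, (σ.get i = true ↔ (i : ℕ) ∈ A)

/-- A set of binary strings is `Σ⁰ₙ` (via the canonical coding). -/
noncomputable def Sigma0Str (n : ℕ) (C : Set (List Bool)) : Prop :=
  Sigma0 n (Encodable.encode '' C)

/-- `A` is Cohen `n`-generic. -/
noncomputable def CGen (n : ℕ) (A : Set ℕ) : Prop :=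
  ∀ C : Set (List Bool), Sigma0Str n C →
    (∃ σ ∈ C, StrSat A σ) ∨ (∃ σ, StrSat A σ ∧ ∀ τ ∈ C, ¬ σ <+: τ)

/-! ### Arithmetical formulas in one free set variable, and Mathias forcing -/

/-- Numeric terms: de Bruijn variables and numerals. -/
inductive Trm : Type
  | var : ℕ → Trm
  | cst : ℕ → Trm

/-- Value of a term under a valuation. -/
def tval (ρ : ℕ → ℕ) : Trm → ℕ
  | .var i => ρ i
  | .cst n => n

/-- Prenex formulas in one free set variable `X`.  The quantifier-free matrix is
given in disjunctive normal form: a disjunct `(P, N)` asserts `t ∈ X` for `t ∈ P`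
and `t ∉ X` for `t ∈ N`. -/
inductive Form : Type
  | dnf : List (List Trm × List Trm) → Form
  | ex : Form → Form
  | all : Form → Form

/-- Push a value onto a de Bruijn valuation. -/
def push (a : ℕ) (ρ : ℕ → ℕ) : ℕ → ℕ
  | 0 => a
  | i + 1 => ρ i

/-- Truth of a formula at the set `A` under the valuation `ρ`. -/
def FEval (ρ : ℕ → ℕ) (A : Set ℕ) : Form → Prop
  | .dnf ds => ∃ d ∈ ds, (∀ t ∈ d.1, tval ρ t ∈ A) ∧ (∀ t ∈ d.2, tval ρ t ∉ A)
  | .ex φ => ∃ a, FEval (push a ρ) A φ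
  | .all φ => ∀ a, FEval (push a ρ) A φ

/-- Strong Mathias forcing of `φ(G)` by the coded condition `p`, under valuation `ρ`. -/
noncomputable def Forces (p : ℕ) (ρ : ℕ → ℕ) : Form → Prop
  | .dnf ds => ∃ d ∈ ds, (∀ t ∈ d.1, tval ρ t ∈ condD p) ∧
      (∀ t ∈ d.2, tval ρ t ∉ (↑(condD p) ∪ condE p : Set ℕ))
  | .ex φ => ∃ a, Forces p (push a ρ) φ
  | .all φ => ∀ q, IsCond q → Ext q p → ∀ a, ∃ r, IsCond r ∧ Ext r q ∧ Forces r (push a ρ) φ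

/-- Classification of prenex formulas: `lev true n φ` means `φ` is `Σ⁰ₙ`,
`lev false n φ` means `φ` is `Π⁰ₙ`. -/
def lev : Bool → ℕ → Form → Prop
  | _, 0, .dnf _ => True
  | true, n + 1, .ex φ => lev false n φ
  | false, n + 1, .all φ => lev true n φ
  | _, _, _ => False

/-- `φ` is a `Σ⁰ₙ` formula. -/
def IsSig (n : ℕ) (φ : Form) : Prop := lev true n φ

/-- `φ` is a `Π⁰ₙ` formula. -/
def IsPiF (n : ℕ) (φ : Form) : Prop := lev false n φ

/-- All free variables of `φ` are `< k`. -/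
def ClosedB : ℕ → Form → Prop
  | k, .dnf ds => ∀ d ∈ ds, ∀ t ∈ d.1 ++ d.2, ∀ i, t = Trm.var i → i < k
  | k, .ex φ => ClosedB (k + 1) φ
  | k, .all φ => ClosedB (k + 1) φ

/-- `φ` has no free number variables (only the free set variable `X`). -/
def ClosedF (φ : Form) : Prop := ClosedB 0 φ

/-- The zero valuation. -/
def ρ0 : ℕ → ℕ := fun _ => 0

/-- Numbering of lists. -/
def encList {α : Type} (f : α → ℕ) : List α → ℕ
  | [] => 0
  | a :: l => Nat.pair (f a) (encList f l) + 1

/-- Numbering of terms. -/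
def encTrm : Trm → ℕ
  | .var i => 2 * i
  | .cst n => 2 * n + 1

/-- Numbering of formulas. -/
def encForm : Form → ℕ
  | .dnf ds => 3 * encList (fun d => Nat.pair (encList encTrm d.1) (encList encTrm d.2)) ds
  | .ex φ => 3 * encForm φ + 1
  | .all φ => 3 * encForm φ + 2

/-!
Fix a c.e. set `W`. The Mathias conditions `(D, E)` with `E ⊆ W` or `E ⊆ Wᶜ` form a `Π⁰₂`,
hence `Σ⁰₃`, set of conditions, and it is dense: every infinite computable `E` has an infinite
computable subset on which `W` is constant — the records of an enumeration of `E ∩ W` when this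
set is infinite, and otherwise a tail of `E`. A `3`-generic `G` cannot avoid a dense `Σ⁰₃` set,
so it satisfies such a condition, and then `G \ D` lies inside `W` or inside `Wᶜ`.
-/

open Nat.Partrec (Code)
open Nat.Partrec.Code

namespace OCode

def ofCode : Code → OCode
  | Code.zero => .zero
  | Code.succ => .succ
  | Code.left => .left
  | Code.right => .right
  | Code.pair a b => .pair (ofCode a) (ofCode b)
  | Code.comp a b => .comp (ofCode a) (ofCode b)
  | Code.prec a b => .prec (ofCode a) (ofCode b)
  | Code.rfind' a => .rfind' (ofCode a)

def toCode : OCode → Code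
  | .zero => Code.zero
  | .succ => Code.succ
  | .left => Code.left
  | .right => Code.right
  | .oracle => Code.zero
  | .pair a b => Code.pair (toCode a) (toCode b)
  | .comp a b => Code.comp (toCode a) (toCode b)
  | .prec a b => Code.prec (toCode a) (toCode b)
  | .rfind' a => Code.rfind' (toCode a)

end OCode

theorem evalo_ofCode (g : ℕ →. ℕ) (c : Code) : evalo g (OCode.ofCode c) = c.eval := by
  induction c <;> simp [OCode.ofCode, evalo, Code.eval, *] <;> rfl

theorem χp_empty : χp (∅ : Set ℕ) = fun _ => Part.some 0 := by
  funext n; simp [χp, χ]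

theorem eval_toCode (c : OCode) : c.toCode.eval = evalo (χp ∅) c := by
  induction c <;> simp [OCode.toCode, evalo, Code.eval, χp_empty, *] <;> rfl

theorem exists_oCode_of_partrec {f : ℕ →. ℕ} (hf : Nat.Partrec f) :
    ∃ c : OCode, ∀ g, evalo g c = f := by
  obtain ⟨c, rfl⟩ := Code.exists_code.1 hf
  exact ⟨.ofCode c, fun g => evalo_ofCode g c⟩

theorem exists_oCode_of_computable {f : ℕ → ℕ} (hf : Computable f) :
    ∃ c : OCode, ∀ g n, evalo g c n = Part.some (f n) := by
  obtain ⟨c, hc⟩ := exists_oCode_of_partrec (Partrec.nat_iff.1 hf)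
  exact ⟨c, fun g n => by rw [hc]; rfl⟩

def ofNatOC : ℕ → OCode
  | 0 => .zero
  | 1 => .succ
  | 2 => .left
  | 3 => .right
  | 4 => .oracle
  | n + 5 =>
    let m := n / 4
    have hm : m < n + 5 := by omega
    have _m1 : m.unpair.1 < n + 5 := lt_of_le_of_lt m.unpair_left_le hm
    have _m2 : m.unpair.2 < n + 5 := lt_of_le_of_lt m.unpair_right_le hm
    match n % 4 with
    | 0 => .pair (ofNatOC m.unpair.1) (ofNatOC m.unpair.2)
    | 1 => .comp (ofNatOC m.unpair.1) (ofNatOC m.unpair.2)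
    | 2 => .prec (ofNatOC m.unpair.1) (ofNatOC m.unpair.2)
    | _ => .rfind' (ofNatOC m)
decreasing_by all_goals omega

theorem encodeOC_ofNatOC (n : ℕ) : encodeOC (ofNatOC n) = n := by
  induction n using Nat.strong_induction_on with
  | _ n ih =>
    match n, ih with
    | 0, _ | 1, _ | 2, _ | 3, _ | 4, _ => simp [ofNatOC, encodeOC]
    | k + 5, ih =>
      have hm : k / 4 < k + 5 := by omega
      have h1 := ih _ (lt_of_le_of_lt (k / 4).unpair_left_le hm)
      have h2 := ih _ (lt_of_le_of_lt (k / 4).unpair_right_le hm)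
      have h3 := ih _ hm
      have : k % 4 = 0 ∨ k % 4 = 1 ∨ k % 4 = 2 ∨ k % 4 = 3 := by omega
      rcases this with h | h | h | h <;>
        simp only [ofNatOC, h, encodeOC, h1, h2, h3, Nat.pair_unpair] <;> omega

theorem ofNatOC_encodeOC (c : OCode) : ofNatOC (encodeOC c) = c := by
  induction c with
  | zero | succ | left | right | oracle => simp [encodeOC, ofNatOC]
  | pair a b iha ihb =>
    rw [show encodeOC (.pair a b) = 4 * Nat.pair (encodeOC a) (encodeOC b) + 5 from rfl, ofNatOC]
    simp [iha, ihb]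
  | comp a b iha ihb =>
    rw [show encodeOC (.comp a b) = (4 * Nat.pair (encodeOC a) (encodeOC b) + 1) + 5 from rfl,
      ofNatOC]
    simp [Nat.add_mod, Nat.add_div, iha, ihb]
  | prec a b iha ihb =>
    rw [show encodeOC (.prec a b) = (4 * Nat.pair (encodeOC a) (encodeOC b) + 2) + 5 from rfl,
      ofNatOC]
    simp [Nat.add_mod, Nat.add_div, iha, ihb]
  | rfind' a iha =>
    rw [show encodeOC (.rfind' a) = (4 * encodeOC a + 3) + 5 from rfl, ofNatOC]
    simp [Nat.add_mod, Nat.add_div, iha]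

theorem encodeOC_injective : Function.Injective encodeOC :=
  Function.LeftInverse.injective ofNatOC_encodeOC

theorem decodeOC_eq_ofNatOC : decodeOC = ofNatOC := by
  funext n
  have h : ∃ c, encodeOC c = n := ⟨ofNatOC n, encodeOC_ofNatOC n⟩
  rw [decodeOC, dif_pos h]
  exact encodeOC_injective (h.choose_spec.trans (encodeOC_ofNatOC n).symm)

theorem decodeOC_encodeOC (c : OCode) : decodeOC (encodeOC c) = c := by
  rw [decodeOC_eq_ofNatOC, ofNatOC_encodeOC]

/-- One step of `n ↦ (ofNatOC n).toCode` as a course-of-values recursion: `L` lists the values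
at `0, …, L.length - 1`. -/
def toCodeStep (L : List Code) : Code :=
  let k := L.length - 5
  let a := L.getD (k / 4).unpair.1 .zero
  let b := L.getD (k / 4).unpair.2 .zero
  if L.length < 5 then [Code.zero, .succ, .left, .right, .zero].getD L.length .zero
  else if k % 4 = 0 then .pair a b
  else if k % 4 = 1 then .comp a b
  else if k % 4 = 2 then .prec a b
  else .rfind' (L.getD (k / 4) .zero)

theorem primrec_toCodeStep : Primrec toCodeStep := by
  have hk : Primrec fun L : List Code => L.length - 5 :=
    Primrec.nat_sub.comp Primrec.list_length (Primrec.const 5)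
  have hm : Primrec fun L : List Code => (L.length - 5) / 4 :=
    Primrec.nat_div.comp hk (Primrec.const 4)
  have hr : Primrec fun L : List Code => (L.length - 5) % 4 :=
    Primrec.nat_mod.comp hk (Primrec.const 4)
  have get : ∀ {f : List Code → ℕ}, Primrec f →
      Primrec fun L : List Code => L.getD (f L) .zero :=
    fun hf => (Primrec.list_getD Code.zero).comp Primrec.id hf
  have ha := get (Primrec.fst.comp (Primrec.unpair.comp hm))
  have hb := get (Primrec.snd.comp (Primrec.unpair.comp hm))
  have hrk : ∀ i, PrimrecPred fun L : List Code => (L.length - 5) % 4 = i :=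
    fun i => Primrec.eq.comp hr (Primrec.const i)
  exact Primrec.ite (Primrec.nat_lt.comp Primrec.list_length (Primrec.const 5))
    ((Primrec.list_getD _).comp (Primrec.const _) Primrec.list_length) <|
    Primrec.ite (hrk 0) (Code.primrec₂_pair.comp ha hb) <|
    Primrec.ite (hrk 1) (Code.primrec₂_comp.comp ha hb) <|
    Primrec.ite (hrk 2) (Code.primrec₂_prec.comp ha hb) <|
    Code.primrec_rfind'.comp (get hm)

theorem toCodeStep_range (n : ℕ) :
    toCodeStep ((List.range n).map fun i => (ofNatOC i).toCode) = (ofNatOC n).toCode := by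
  match n with
  | 0 | 1 | 2 | 3 | 4 => simp [toCodeStep, ofNatOC, OCode.toCode]
  | k + 5 =>
    have hm : k / 4 < k + 5 := by omega
    have h1 := lt_of_le_of_lt (k / 4).unpair_left_le hm
    have h2 := lt_of_le_of_lt (k / 4).unpair_right_le hm
    have : k % 4 = 0 ∨ k % 4 = 1 ∨ k % 4 = 2 ∨ k % 4 = 3 := by omega
    rcases this with h | h | h | h <;>
      simp [toCodeStep, h, hm, h1, h2, ofNatOC, OCode.toCode]

def codeOfNat (n : ℕ) : Code := (ofNatOC n).toCode

theorem primrec_codeOfNat : Primrec codeOfNat := by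
  have hg : Primrec₂ fun (_ : Unit) (L : List Code) => some (toCodeStep L) :=
    Primrec.option_some.comp (primrec_toCodeStep.comp Primrec.snd)
  have := Primrec.nat_strong_rec (fun (_ : Unit) n => codeOfNat n) hg
    (fun _ n => congrArg some (toCodeStep_range n))
  exact this.comp (Primrec.const ()) Primrec.id

theorem eval_codeOfNat (e : ℕ) : (codeOfNat e).eval = evalo (χp ∅) (decodeOC e) := by
  rw [codeOfNat, eval_toCode, decodeOC_eq_ofNatOC]

theorem χ_eq_zero_iff {A : Set ℕ} {n : ℕ} : χ A n = 0 ↔ n ∉ A := by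
  by_cases h : n ∈ A <;> simp [χ, h]

theorem evalo_comp_of_eq_some {g : ℕ →. ℕ} {c c' : OCode} {n m : ℕ}
    (h : evalo g c' n = Part.some m) : evalo g (.comp c c') n = evalo g c m := by
  show evalo g c' n >>= evalo g c = _
  rw [h]
  exact Part.bind_some _ _

theorem rfind_some_dom {p : ℕ → Bool} :
    (Nat.rfind fun n => Part.some (p n)).Dom ↔ ∃ n, p n = true := by
  refine Nat.rfind_dom.trans ⟨fun ⟨n, h, _⟩ => ⟨n, by simpa using h⟩,
    fun ⟨n, h⟩ => ⟨n, by simpa using h, fun _ => trivial⟩⟩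

theorem TR.refl (A : Set ℕ) : TR A A := ⟨.oracle, fun _ => rfl⟩

theorem TR.preimage {S B : Set ℕ} (h : TR S B) {f : ℕ → ℕ} (hf : Computable f) :
    TR (f ⁻¹' S) B := by
  obtain ⟨c, hc⟩ := h
  obtain ⟨cf, hcf⟩ := exists_oCode_of_computable hf
  exact ⟨.comp c cf, fun n => by rw [evalo_comp_of_eq_some (hcf _ n), hc]; rfl⟩

theorem TR.compl {S B : Set ℕ} (h : TR S B) : TR Sᶜ B := by
  obtain ⟨c, hc⟩ := h
  obtain ⟨cf, hcf⟩ := exists_oCode_of_computable (f := fun v => 1 - v) (Primrec.nat_sub.comp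
    (Primrec.const 1) Primrec.id).to_comp
  refine ⟨.comp cf c, fun n => ?_⟩
  rw [evalo_comp_of_eq_some (hc n), hcf]
  by_cases h : n ∈ S <;> simp [χp, χ, h]

def constOC : ℕ → OCode
  | 0 => .zero
  | n + 1 => .comp .succ (constOC n)

theorem evalo_constOC (g : ℕ →. ℕ) (n x : ℕ) : evalo g (constOC n) x = Part.some n := by
  induction n with
  | zero => rfl
  | succ n ih => simp [constOC, evalo, ih]

theorem primrec_encodeOC_constOC : Primrec fun n => encodeOC (constOC n) := by
  have h : Primrec fun n => (fun x => 4 * Nat.pair 1 x + 6)^[n] 0 :=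
    Primrec.nat_iterate Primrec.id (Primrec.const 0) <| Primrec.to₂ <|
      Primrec.nat_add.comp (Primrec.nat_mul.comp (Primrec.const 4)
        (Primrec₂.natPair.comp (Primrec.const 1) Primrec.snd)) (Primrec.const 6)
  refine h.of_eq fun n => ?_
  induction n with
  | zero => rfl
  | succ n ih => rw [Function.iterate_succ_apply', ih]; rfl

theorem encodeOC_comp_constOC_mem_jump {A : Set ℕ} {c : OCode} {n : ℕ} :
    encodeOC (.comp c (constOC n)) ∈ jump A ↔ (evalo (χp A) c n).Dom := by
  have heval : ∀ x, evalo (χp A) (.comp c (constOC n)) x = evalo (χp A) c n :=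
    fun x => evalo_comp_of_eq_some (evalo_constOC _ n x)
  constructor
  · rintro ⟨c', hc', hdom⟩
    rw [encodeOC_injective hc'] at hdom
    rwa [heval] at hdom
  · intro h
    exact ⟨_, rfl, by rwa [heval]⟩

theorem CeIn.tr_jump {A S : Set ℕ} (h : CeIn A S) : TR S (jump A) := by
  obtain ⟨c, rfl⟩ := h
  have hf : Computable fun n => encodeOC (.comp c (constOC n)) :=
    (Primrec.nat_add.comp (Primrec.nat_mul.comp (Primrec.const 4)
      (Primrec₂.natPair.comp (Primrec.const _) primrec_encodeOC_constOC))
      (Primrec.const 6)).to_comp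
  convert (TR.refl (jump A)).preimage hf using 1
  ext n
  exact encodeOC_comp_constOC_mem_jump.symm

theorem TR.ceIn_exists {T B : Set ℕ} (h : TR T B) : CeIn B {p | ∃ a, Nat.pair p a ∈ T} := by
  obtain ⟨c, hc⟩ := h.compl
  obtain ⟨cp, hcp⟩ := exists_oCode_of_computable (f := fun p => Nat.pair p 0)
    (Primrec₂.natPair.comp Primrec.id (Primrec.const 0)).to_comp
  refine ⟨.comp (.rfind' c) cp, Set.ext fun p => ?_⟩
  show _ ↔ (evalo (χp B) (.comp (.rfind' c) cp) p).Dom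
  rw [evalo_comp_of_eq_some (hcp _ p)]
  simp [evalo, hc, χp, χ_eq_zero_iff, rfind_some_dom]

theorem TR.ceIn {S B : Set ℕ} (h : TR S B) : CeIn B S := by
  simpa using (h.preimage (f := fun m => m.unpair.1)
    (Primrec.fst.comp Primrec.unpair).to_comp).ceIn_exists

theorem CeIn.ceIn_jump_jump_forall {A T : Set ℕ} (h : CeIn A T) :
    CeIn (jump (jump A)) {p | ∀ a, Nat.pair p a ∈ T} := by
  have hU : CeIn (jump A) {p | ∃ a, Nat.pair p a ∈ Tᶜ} := h.tr_jump.compl.ceIn_exists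
  convert hU.tr_jump.compl.ceIn using 1
  ext p
  simp

theorem ceIn_exists_of_primrecRel {R : ℕ → ℕ → Prop} (hR : PrimrecRel R) (B : Set ℕ) :
    CeIn B {m | ∃ b, R m b} := by
  classical
  have hf : Partrec fun m => Nat.rfind fun b => Part.some (decide (R m b)) :=
    Partrec.rfind hR.decide.to_comp.partrec₂
  obtain ⟨c, hc⟩ := exists_oCode_of_partrec (Partrec.nat_iff.1 hf)
  refine ⟨c, Set.ext fun m => ?_⟩
  simp [hc, rfind_some_dom]

def IsPi2 (S : Set ℕ) : Prop :=
  ∃ R : ℕ × ℕ × ℕ → Prop, PrimrecPred R ∧ ∀ p, p ∈ S ↔ ∀ a, ∃ b, R (p, a, b)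

theorem primrec_unpair_args {i : ℕ × ℕ → ℕ} (hi : Primrec i) :
    Primrec fun x : ℕ × ℕ × ℕ => (x.1, i x.2.1.unpair, i x.2.2.unpair) :=
  Primrec.fst.pair ((hi.comp (Primrec.unpair.comp (Primrec.fst.comp Primrec.snd))).pair
    (hi.comp (Primrec.unpair.comp (Primrec.snd.comp Primrec.snd))))

namespace IsPi2

theorem sigma0_three {S : Set ℕ} (h : IsPi2 S) : Sigma0 3 S := by
  obtain ⟨R, hR, hS⟩ := h
  have hR' : PrimrecRel fun (m b : ℕ) => R (m.unpair.1, m.unpair.2, b) :=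
    hR.comp ((Primrec.fst.comp (Primrec.unpair.comp Primrec.fst)).pair
      ((Primrec.snd.comp (Primrec.unpair.comp Primrec.fst)).pair Primrec.snd))
  have := (ceIn_exists_of_primrecRel hR' ∅).ceIn_jump_jump_forall
  simp only [Set.mem_ofPred_eq, Nat.unpair_pair, ← hS] at this
  exact this

theorem of_forall {Q : ℕ × ℕ → Prop} (hQ : PrimrecPred Q) : IsPi2 {p | ∀ a, Q (p, a)} :=
  ⟨fun x => Q (x.1, x.2.1), hQ.comp (Primrec.fst.pair (Primrec.fst.comp Primrec.snd)),
    fun p => by simp⟩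

theorem inter {S T : Set ℕ} (hS : IsPi2 S) (hT : IsPi2 T) : IsPi2 (S ∩ T) := by
  obtain ⟨R, hR, hRS⟩ := hS
  obtain ⟨Q, hQ, hQT⟩ := hT
  refine ⟨fun x => R (x.1, x.2.1.unpair.1, x.2.2.unpair.1) ∧
    Q (x.1, x.2.1.unpair.2, x.2.2.unpair.2), ?_, fun p => ?_⟩
  · exact (hR.comp (primrec_unpair_args Primrec.fst)).and
      (hQ.comp (primrec_unpair_args Primrec.snd))
  · simp only [Set.mem_inter_iff, hRS, hQT]
    constructor
    · rintro ⟨hr, hq⟩ a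
      obtain ⟨b, hb⟩ := hr a.unpair.1
      obtain ⟨b', hb'⟩ := hq a.unpair.2
      exact ⟨Nat.pair b b', by simpa using hb, by simpa using hb'⟩
    · intro h
      refine ⟨fun a => ?_, fun a => ?_⟩
      · obtain ⟨b, hb, -⟩ := h (Nat.pair a 0)
        exact ⟨_, by simpa using hb⟩
      · obtain ⟨b, -, hb⟩ := h (Nat.pair 0 a)
        exact ⟨_, by simpa using hb⟩

/-- If the first disjunct fails at some `a₀`, the second must hold at every `a`:
test the pair `(a₀, a)`. -/
theorem union {S T : Set ℕ} (hS : IsPi2 S) (hT : IsPi2 T) : IsPi2 (S ∪ T) := by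
  obtain ⟨R, hR, hRS⟩ := hS
  obtain ⟨Q, hQ, hQT⟩ := hT
  refine ⟨fun x => R (x.1, x.2.1.unpair.1, x.2.2.unpair.1) ∨
    Q (x.1, x.2.1.unpair.2, x.2.2.unpair.2), ?_, fun p => ?_⟩
  · exact (hR.comp (primrec_unpair_args Primrec.fst)).or
      (hQ.comp (primrec_unpair_args Primrec.snd))
  · simp only [Set.mem_union, hRS, hQT]
    constructor
    · rintro (hr | hq) a
      · obtain ⟨b, hb⟩ := hr a.unpair.1
        exact ⟨Nat.pair b 0, Or.inl (by simpa using hb)⟩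
      · obtain ⟨b, hb⟩ := hq a.unpair.2
        exact ⟨Nat.pair 0 b, Or.inr (by simpa using hb)⟩
    · intro h
      by_contra! hne
      obtain ⟨⟨a₀, ha₀⟩, ⟨a₁, ha₁⟩⟩ := hne
      obtain ⟨b, hb | hb⟩ := h (Nat.pair a₀ a₁)
      · exact ha₀ _ (by simpa using hb)
      · exact ha₁ _ (by simpa using hb)

end IsPi2

theorem eval_eq_some_iff_exists_evaln {c : Code} {x v : ℕ} :
    c.eval x = Part.some v ↔ ∃ s, evaln s c x = some v := by
  rw [Part.eq_some_iff, evaln_complete]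
  rfl

theorem CeIn.exists_code {W : Set ℕ} (h : CeIn ∅ W) :
    ∃ c : Code, ∀ x, x ∈ W ↔ ∃ t, (evaln t c x).isSome := by
  obtain ⟨w, rfl⟩ := h
  refine ⟨w.toCode, fun x => ?_⟩
  simp only [Set.mem_ofPred_eq, ← eval_toCode, Part.dom_iff_mem, evaln_complete,
    Option.isSome_iff_exists, Option.mem_def]
  exact exists_comm

def condEStage (p s x : ℕ) : Option ℕ := evaln s (codeOfNat p.unpair.2) x

theorem primrecPred_condEStage_eq {α : Type*} [Primcodable α] {f g h : α → ℕ}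
    (hf : Primrec f) (hg : Primrec g) (hh : Primrec h) (v : ℕ) :
    PrimrecPred fun y => condEStage (f y) (g y) (h y) = some v :=
  Primrec.eq.comp (Code.primrec_evaln.comp ((hg.pair (primrec_codeOfNat.comp
    (Primrec.snd.comp (Primrec.unpair.comp hf)))).pair hh)) (Primrec.const _)

theorem primrecPred_evaln_isSome {α : Type*} [Primcodable α] (c : Code) {g h : α → ℕ}
    (hg : Primrec g) (hh : Primrec h) : PrimrecPred fun y => (evaln (g y) c (h y)).isSome :=
  Primrec.eq.comp (Primrec.option_isSome.comp (Code.primrec_evaln.comp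
    ((hg.pair (Primrec.const c)).pair hh))) (Primrec.const true)

theorem mem_condE_iff {p x : ℕ} : x ∈ condE p ↔ ∃ s, condEStage p s x = some 1 := by
  rw [condE, Set.mem_ofPred_eq, ← eval_codeOfNat, eval_eq_some_iff_exists_evaln]
  rfl

theorem condETotal_iff {p : ℕ} :
    condETotal p ↔ ∀ x, ∃ s, condEStage p s x = some 0 ∨ condEStage p s x = some 1 := by
  simp only [condETotal, ← eval_codeOfNat, eval_eq_some_iff_exists_evaln, exists_or]
  rfl

theorem isPi2_condETotal : IsPi2 {p | condETotal p} := by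
  have hE : ∀ v, PrimrecPred fun y : ℕ × ℕ × ℕ => condEStage y.1 y.2.2 y.2.1 = some v :=
    primrecPred_condEStage_eq Primrec.fst (Primrec.snd.comp Primrec.snd)
      (Primrec.fst.comp Primrec.snd)
  exact ⟨_, (hE 0).or (hE 1), fun _ => condETotal_iff⟩

theorem isPi2_forall_condE_gt : IsPi2 {p | ∀ x ∈ condE p, p.unpair.1 < x} := by
  have hx : Primrec fun y : ℕ × ℕ => y.2.unpair.1 :=
    Primrec.fst.comp (Primrec.unpair.comp Primrec.snd)
  have hs : Primrec fun y : ℕ × ℕ => y.2.unpair.2 :=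
    Primrec.snd.comp (Primrec.unpair.comp Primrec.snd)
  have hQ := ((primrecPred_condEStage_eq Primrec.fst hs hx 1).not.or
    (Primrec.nat_lt.comp (Primrec.fst.comp (Primrec.unpair.comp Primrec.fst)) hx)).of_eq
    fun _ => imp_iff_not_or.symm
  convert IsPi2.of_forall hQ using 1
  ext p
  simp only [Set.mem_ofPred_eq, mem_condE_iff]
  exact ⟨fun h a ha => h _ ⟨_, ha⟩,
    fun h x ⟨s, hs⟩ => by simpa using h (Nat.pair x s) (by simpa using hs)⟩

theorem isPi2_condE_infinite : IsPi2 {p | (condE p).Infinite} := by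
  have hx : Primrec fun y : ℕ × ℕ × ℕ => y.2.2.unpair.1 :=
    Primrec.fst.comp (Primrec.unpair.comp (Primrec.snd.comp Primrec.snd))
  have hs : Primrec fun y : ℕ × ℕ × ℕ => y.2.2.unpair.2 :=
    Primrec.snd.comp (Primrec.unpair.comp (Primrec.snd.comp Primrec.snd))
  refine ⟨fun y => y.2.1 < y.2.2.unpair.1 ∧
      condEStage y.1 y.2.2.unpair.2 y.2.2.unpair.1 = some 1,
    (Primrec.nat_lt.comp (Primrec.fst.comp Primrec.snd) hx).and
      (primrecPred_condEStage_eq Primrec.fst hs hx 1), fun p => ?_⟩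
  simp only [Set.mem_ofPred_eq]
  constructor
  · intro h n
    obtain ⟨x, hx, hnx⟩ := h.exists_gt n
    obtain ⟨s, hs⟩ := mem_condE_iff.1 hx
    exact ⟨Nat.pair x s, by simpa using ⟨hnx, hs⟩⟩
  · intro h
    refine Set.infinite_of_forall_exists_gt fun n => ?_
    obtain ⟨b, hnb, hb⟩ := h n
    exact ⟨_, mem_condE_iff.2 ⟨_, hb⟩, hnb⟩

theorem isPi2_condE_subset {W : Set ℕ} {c : Code}
    (hW : ∀ x, x ∈ W ↔ ∃ t, (evaln t c x).isSome) : IsPi2 {p | condE p ⊆ W} := by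
  have hx : Primrec fun y : ℕ × ℕ × ℕ => y.2.1.unpair.1 :=
    Primrec.fst.comp (Primrec.unpair.comp (Primrec.fst.comp Primrec.snd))
  have hs : Primrec fun y : ℕ × ℕ × ℕ => y.2.1.unpair.2 :=
    Primrec.snd.comp (Primrec.unpair.comp (Primrec.fst.comp Primrec.snd))
  refine ⟨fun y => condEStage y.1 y.2.1.unpair.2 y.2.1.unpair.1 = some 1 →
      (evaln y.2.2 c y.2.1.unpair.1).isSome,
    ((primrecPred_condEStage_eq Primrec.fst hs hx 1).not.or
      (primrecPred_evaln_isSome c (Primrec.snd.comp Primrec.snd) hx)).of_eq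
      fun _ => imp_iff_not_or.symm, fun p => ?_⟩
  simp only [Set.mem_ofPred_eq]
  constructor
  · intro h a
    by_cases ha : condEStage p a.unpair.2 a.unpair.1 = some 1
    · obtain ⟨t, ht⟩ := (hW _).1 (h (mem_condE_iff.2 ⟨_, ha⟩))
      exact ⟨t, fun _ => ht⟩
    · exact ⟨0, fun h => absurd h ha⟩
  · intro h x hx
    obtain ⟨s, hs⟩ := mem_condE_iff.1 hx
    obtain ⟨t, ht⟩ := h (Nat.pair x s)
    exact (hW x).2 ⟨t, by simpa using ht (by simpa using hs)⟩

theorem isPi2_condE_subset_compl {W : Set ℕ} {c : Code}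
    (hW : ∀ x, x ∈ W ↔ ∃ t, (evaln t c x).isSome) : IsPi2 {p | condE p ⊆ Wᶜ} := by
  have hx : Primrec fun y : ℕ × ℕ => y.2.unpair.1 :=
    Primrec.fst.comp (Primrec.unpair.comp Primrec.snd)
  have hs : Primrec fun y : ℕ × ℕ => y.2.unpair.2.unpair.1 :=
    Primrec.fst.comp (Primrec.unpair.comp (Primrec.snd.comp (Primrec.unpair.comp Primrec.snd)))
  have ht : Primrec fun y : ℕ × ℕ => y.2.unpair.2.unpair.2 :=
    Primrec.snd.comp (Primrec.unpair.comp (Primrec.snd.comp (Primrec.unpair.comp Primrec.snd)))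
  convert IsPi2.of_forall ((primrecPred_condEStage_eq Primrec.fst hs hx 1).and
    (primrecPred_evaln_isSome c ht hx)).not using 1
  ext p
  simp only [Set.mem_ofPred_eq]
  constructor
  · intro h a ⟨hE, hW'⟩
    exact h (mem_condE_iff.2 ⟨_, hE⟩) ((hW _).2 ⟨_, hW'⟩)
  · intro h x hx hxW
    obtain ⟨s, hs⟩ := mem_condE_iff.1 hx
    obtain ⟨t, ht⟩ := (hW x).1 hxW
    exact h (Nat.pair x (Nat.pair s t)) (by simpa using ⟨hs, ht⟩)

/-- Since `p.unpair.1` bounds every element of `condD p` (`le_of_mem_ofNat_finset`), the clause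
`p.unpair.1 < x` makes `max D < min E` a `Π⁰₁` property of the code `p`. -/
def cohesiveConds (W : Set ℕ) : Set ℕ :=
  {p | condETotal p ∧ (∀ x ∈ condE p, p.unpair.1 < x) ∧ (condE p).Infinite ∧
    (condE p ⊆ W ∨ condE p ⊆ Wᶜ)}

theorem isPi2_cohesiveConds {W : Set ℕ} (hW : CeIn ∅ W) : IsPi2 (cohesiveConds W) := by
  obtain ⟨c, hc⟩ := hW.exists_code
  exact isPi2_condETotal.inter <| isPi2_forall_condE_gt.inter <| isPi2_condE_infinite.inter <|
    (isPi2_condE_subset hc).union (isPi2_condE_subset_compl hc)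

theorem sum_add_length_le_encode (l : List ℕ) : l.sum + l.length ≤ Encodable.encode l := by
  induction l with
  | nil => simp
  | cons a l ih =>
    have := Nat.add_le_pair a (Encodable.encode l)
    simp only [Encodable.encode_list_cons, Encodable.encode_nat, List.sum_cons, List.length_cons]
    omega

theorem le_of_mem_raise' {l : List ℕ} {n d : ℕ} (hd : d ∈ Denumerable.raise' l n) :
    d ≤ n + (l.sum + l.length) := by
  induction l generalizing n with
  | nil => simp [Denumerable.raise'] at hd
  | cons a l ih =>
    rcases List.mem_cons.1 hd with rfl | h
    · simp only [List.sum_cons, List.length_cons]; omega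
    · have := ih h
      simp only [List.sum_cons, List.length_cons]
      omega

theorem le_of_mem_ofNat_finset {m d : ℕ} (hd : d ∈ Denumerable.ofNat (Finset ℕ) m) :
    d ≤ m := by
  rw [Denumerable.ofNat_of_decode (n := m) rfl] at hd
  obtain ⟨d', hd', rfl⟩ := Finset.mem_map.1 hd
  have := sum_add_length_le_encode (Denumerable.ofNat (List ℕ) m)
  rw [Denumerable.encode_ofNat] at this
  have := le_of_mem_raise' (show d' ∈ Denumerable.raise' _ 0 from hd')
  change Denumerable.ofNat ℕ d' ≤ m
  rw [Denumerable.ofNat_nat]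
  omega

theorem condSet_cohesiveConds (W : Set ℕ) : CondSet (cohesiveConds W) := by
  rintro p ⟨hT, hgt, hinf, -⟩
  exact ⟨⟨hT, fun d hd x hx => (le_of_mem_ofNat_finset hd).trans_lt (hgt x hx)⟩, hinf⟩

theorem computableSet_of_computable_χ {A : Set ℕ} (h : Computable (χ A)) : ComputableSet A := by
  obtain ⟨c, hc⟩ := exists_oCode_of_computable h
  exact ⟨c, fun n => hc _ n⟩

/-- Enumerate `{x | ∃ b, R x b}` by the codes `k` with `R k.unpair.1 k.unpair.2`. Its records
(elements larger than everything enumerated before them) form an infinite computable subset: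
`x` is a record iff the first enumerated element `≥ x` is `x` itself. -/
theorem exists_infinite_computableSet_subset {R : ℕ → ℕ → Prop} (hR : PrimrecRel R)
    (hinf : {x | ∃ b, R x b}.Infinite) :
    ∃ A ⊆ {x | ∃ b, R x b}, A.Infinite ∧ ComputableSet A := by
  classical
  let P : ℕ → ℕ → Prop := fun x k => x ≤ k.unpair.1 ∧ R k.unpair.1 k.unpair.2
  have hP : ∀ x, ∃ k, P x k := fun x => by
    obtain ⟨y, ⟨b, hb⟩, hxy⟩ := hinf.exists_gt x
    exact ⟨Nat.pair y b, by simpa [P] using ⟨hxy.le, hb⟩⟩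
  let first : ℕ → ℕ := fun x => (Nat.find (hP x)).unpair.1
  have hfirst : ∀ x, x ≤ first x := fun x => (Nat.find_spec (hP x)).1
  have first_first : ∀ x, first (first x) = first x := fun x => by
    have hk : Nat.find (hP (first x)) = Nat.find (hP x) :=
      le_antisymm (Nat.find_min' _ ⟨le_rfl, (Nat.find_spec (hP x)).2⟩)
        (Nat.find_min' _ ⟨(hfirst x).trans (Nat.find_spec (hP (first x))).1,
          (Nat.find_spec (hP (first x))).2⟩)
    simp only [first, hk]
  refine ⟨{x | first x = x}, fun x (hx : first x = x) => ?_, ?_, ?_⟩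
  · have h := (Nat.find_spec (hP x)).2
    rw [show (Nat.find (hP x)).unpair.1 = x from hx] at h
    exact ⟨_, h⟩
  · exact Set.infinite_of_forall_exists_gt fun n =>
      ⟨first (n + 1), first_first _, Nat.lt_of_succ_le (hfirst _)⟩
  · apply computableSet_of_computable_χ
    have hfind : Computable fun x => Nat.find (hP x) :=
      Computable.find (hR.comp (Primrec.fst.comp (Primrec.unpair.comp Primrec.snd))
        (Primrec.snd.comp (Primrec.unpair.comp Primrec.snd)) |>.and
        (Primrec.nat_le.comp Primrec.fst (Primrec.fst.comp (Primrec.unpair.comp Primrec.snd)))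
        |>.of_eq fun _ => and_comm).computablePred hP
    refine ((Primrec.ite Primrec.eq (Primrec.const 1) (Primrec.const 0)).to_comp.comp
      (((Computable.fst.comp (Computable.unpair.comp hfind)).pair Computable.id))).of_eq fun x => ?_
    simp [χ, first]

/-- Inside `W` if `E ∩ W` is infinite, and otherwise a tail of `E` avoiding `W`. -/
theorem exists_computableSet_subset_condE {p : ℕ} (hp : IsCond p) {W : Set ℕ}
    (hW : CeIn ∅ W) :
    ∃ A, ComputableSet A ∧ A.Infinite ∧ A ⊆ condE p ∧ (∀ x ∈ A, p.unpair.1 < x) ∧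
      (A ⊆ W ∨ A ⊆ Wᶜ) := by
  obtain ⟨c, hc⟩ := hW.exists_code
  have hx : Primrec fun y : ℕ × ℕ => y.1 := Primrec.fst
  by_cases hEW : (condE p ∩ W).Infinite
  · obtain ⟨A, hAR, hAinf, hA⟩ := exists_infinite_computableSet_subset
      (R := fun x b => p.unpair.1 < x ∧ condEStage p b.unpair.1 x = some 1 ∧
        (evaln b.unpair.2 c x).isSome)
      ((Primrec.nat_lt.comp (Primrec.const _) hx).and
        ((primrecPred_condEStage_eq (Primrec.const p) (Primrec.fst.comp (Primrec.unpair.comp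
          Primrec.snd)) hx 1).and (primrecPred_evaln_isSome c (Primrec.snd.comp
            (Primrec.unpair.comp Primrec.snd)) hx)))
      ((hEW.sdiff (Set.finite_Iic p.unpair.1)).mono fun x hx => by
        obtain ⟨⟨hxE, hxW⟩, hxd⟩ := hx
        obtain ⟨s, hs⟩ := mem_condE_iff.1 hxE
        obtain ⟨t, ht⟩ := (hc x).1 hxW
        exact ⟨Nat.pair s t, not_le.1 hxd, by simpa using hs, by simpa using ht⟩)
    refine ⟨A, hA, hAinf, fun x hx => ?_, fun x hx => ?_, Or.inl fun x hx => ?_⟩ <;>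
      obtain ⟨b, hd, hs, ht⟩ := hAR hx
    exacts [mem_condE_iff.2 ⟨_, hs⟩, hd, (hc x).2 ⟨_, ht⟩]
  · obtain ⟨B, hB⟩ := (Set.not_infinite.1 hEW).bddAbove
    obtain ⟨A, hAR, hAinf, hA⟩ := exists_infinite_computableSet_subset
      (R := fun x s => max B p.unpair.1 < x ∧ condEStage p s x = some 1)
      ((Primrec.nat_lt.comp (Primrec.const _) hx).and
        (primrecPred_condEStage_eq (Primrec.const p) Primrec.snd hx 1))
      ((hp.2.sdiff (Set.finite_Iic (max B p.unpair.1))).mono fun x hx => by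
        obtain ⟨hxE, hxB⟩ := hx
        obtain ⟨s, hs⟩ := mem_condE_iff.1 hxE
        exact ⟨s, not_le.1 hxB, hs⟩)
    refine ⟨A, hA, hAinf, fun x hx => ?_, fun x hx => ?_, Or.inr fun x hx hxW => ?_⟩ <;>
      obtain ⟨s, hd, hs⟩ := hAR hx
    · exact mem_condE_iff.2 ⟨_, hs⟩
    · exact lt_of_le_of_lt (le_max_right _ _) hd
    · exact absurd (hB ⟨mem_condE_iff.2 ⟨_, hs⟩, hxW⟩)
        (not_le.2 (lt_of_le_of_lt (le_max_left _ _) hd))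

theorem condE_pair_encodeOC {A : Set ℕ} {c : OCode} (hc : ∀ n, evalo (χp ∅) c n = χp A n)
    (d : ℕ) : condE (Nat.pair d (encodeOC c)) = A := by
  ext x
  by_cases hx : x ∈ A <;> simp [condE, decodeOC_encodeOC, hc, χp, χ, hx]

theorem condETotal_pair_encodeOC {A : Set ℕ} {c : OCode}
    (hc : ∀ n, evalo (χp ∅) c n = χp A n) (d : ℕ) : condETotal (Nat.pair d (encodeOC c)) := by
  intro x
  by_cases hx : x ∈ A <;> simp [decodeOC_encodeOC, hc, χp, χ, hx]

theorem denseCond_cohesiveConds {W : Set ℕ} (hW : CeIn ∅ W) : DenseCond (cohesiveConds W) := by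
  intro p hp
  obtain ⟨A, ⟨c, hc⟩, hAinf, hAE, hAgt, hAW⟩ := exists_computableSet_subset_condE hp hW
  have hE := condE_pair_encodeOC hc p.unpair.1
  have hD : condD (Nat.pair p.unpair.1 (encodeOC c)) = condD p := by simp [condD]
  refine ⟨Nat.pair p.unpair.1 (encodeOC c),
    ⟨condETotal_pair_encodeOC hc _, ?_, ?_, ?_⟩, ?_, ?_, ?_⟩
  all_goals simp only [hE, hD, Nat.unpair_pair]
  exacts [hAgt, hAinf, hAW, subset_rfl, Set.subset_union_left, hAE]

theorem MGen.meets_of_denseCond {n : ℕ} {G C : Set ℕ} (hG : MGen n G) (hC : Sigma0 n C)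
    (hCc : CondSet C) (hD : DenseCond C) : Meets G C :=
  (hG C hC hCc).resolve_right fun ⟨p, hp, _, hAv⟩ =>
    let ⟨q, hqC, hqp⟩ := hD p hp
    hAv q (hCc q hqC) hqp hqC

theorem finite_diff_of_subset_union {G E W : Set ℕ} {D : Finset ℕ} (hG : G ⊆ ↑D ∪ E)
    (hE : E ⊆ W) : (G \ W).Finite :=
  D.finite_toSet.subset fun _ ⟨hxG, hxW⟩ => (hG hxG).resolve_right fun hxE => hxW (hE hxE)

end MathiasGenerics

namespace MathiasGenerics

/-- Every Mathias `3`-generic set is cohesive: for each c.e. set `W`, either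
`G ⊆* W` or `G ⊆* Wᶜ`. -/
theorem generic_cohesive (G : Set ℕ) (hG : MGen 3 G) :
    ∀ W : Set ℕ, CeIn ∅ W → (G \ W).Finite ∨ (G \ Wᶜ).Finite := by
  intro W hW
  obtain ⟨p, ⟨-, -, -, hEW⟩, -, hGp⟩ := hG.meets_of_denseCond
    (isPi2_cohesiveConds hW).sigma0_three (condSet_cohesiveConds W) (denseCond_cohesiveConds hW)
  exact hEW.imp (finite_diff_of_subset_union hGp) (finite_diff_of_subset_union hGp)

end MathiasGenerics
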